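/- Let G be a group and let u, h ∈ G. Set a = u h u^{-1} and assume u a u^{-1} = a^{-1} h a. Then for every integer k ≥ 1: if k is odd, u^k h u^{-k} = ⟨a^{-1}, h^{-1}⟩_{k-1} · ⟨a, h⟩_k, and if k is even, u^k h u^{-k} = ⟨a^{-1}, h^{-1}⟩_{k-1} · ⟨h, a⟩_k. -/
import Mathlib

namespace Stmt17

/-- `alt x y k` is the alternating product `x y x y ⋯` with `k` factors, starting with `x`. -/
def alt {G : Type*} [Monoid G] (x y : G) : ℕ → G
  | 0 => 1
  | k + 1 => x * alt y x k

lemma swap_pow {G : Type*} [Monoid G] (x y : G) (n : ℕ) :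
    x * (y * x) ^ n = (x * y) ^ n * x := by
  induction n with
  | zero => simp
  | succ n ih =>
    rw [pow_succ', pow_succ',
      show x * (y * x * (y * x) ^ n) = x * y * (x * (y * x) ^ n) from by simp [mul_assoc],
      ih]
    simp [mul_assoc]

lemma alt_two_add {G : Type*} [Monoid G] (x y : G) (n : ℕ) :
    alt x y (n + 2) = x * y * alt x y n := by
  rw [alt, alt, mul_assoc]

lemma alt_even {G : Type*} [Monoid G] (x y : G) (n : ℕ) :
    alt x y (2 * n) = (x * y) ^ n := by
  induction n with
  | zero => simp [alt]
  | succ n ih =>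
    rw [show 2 * (n + 1) = 2 * n + 2 from by ring, alt_two_add, ih, pow_succ']

lemma alt_odd {G : Type*} [Monoid G] (x y : G) (n : ℕ) :
    alt x y (2 * n + 1) = (x * y) ^ n * x := by
  rw [alt, alt_even, swap_pow]

theorem stmt_17 {G : Type*} [Group G] (u h a : G) (ha : a = u * h * u⁻¹)
    (hconj : u * a * u⁻¹ = a⁻¹ * h * a) :
    ∀ k : ℕ, 1 ≤ k →
      (Odd k → u ^ k * h * (u ^ k)⁻¹ = alt a⁻¹ h⁻¹ (k - 1) * alt a h k) ∧
      (Even k → u ^ k * h * (u ^ k)⁻¹ = alt a⁻¹ h⁻¹ (k - 1) * alt h a k) := by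
  set φ := MulAut.conj u with hφ
  have φdef : ∀ g : G, φ g = u * g * u⁻¹ := fun g => rfl
  have φh : φ h = a := by rw [φdef, ← ha]
  have φa : φ a = a⁻¹ * h * a := by rw [φdef, hconj]
  have step : ∀ k : ℕ, u ^ (k + 1) * h * (u ^ (k + 1))⁻¹ = φ (u ^ k * h * (u ^ k)⁻¹) := by
    intro k
    rw [φdef, pow_succ']
    group
  have φih : φ (a⁻¹ * h⁻¹) = a⁻¹ * h⁻¹ := by
    rw [map_mul, map_inv, map_inv, φa, φh]; group
  have φha : φ (h * a) = h * a := by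
    rw [map_mul, φh, φa]; group
  have φah : φ (a * h) = a⁻¹ * (h * a) * a := by
    rw [map_mul, φa, φh]; group
  have key : ∀ n : ℕ,
      u ^ (2 * n + 1) * h * (u ^ (2 * n + 1))⁻¹ = (a⁻¹ * h⁻¹) ^ n * ((a * h) ^ n * a) ∧
      u ^ (2 * n + 2) * h * (u ^ (2 * n + 2))⁻¹
        = (a⁻¹ * h⁻¹) ^ n * (a⁻¹ * (h * a) ^ (n + 1)) := by
    intro n
    induction n with
    | zero =>
      constructor
      · simpa using ha.symm
      · rw [show (2 * 0 + 2 : ℕ) = 1 + 1 from rfl, step 1]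
        simp only [pow_one, ← ha, φa, pow_zero, one_mul]
        group
    | succ n ih =>
      have hodd : u ^ (2 * (n + 1) + 1) * h * (u ^ (2 * (n + 1) + 1))⁻¹
          = (a⁻¹ * h⁻¹) ^ (n + 1) * ((a * h) ^ (n + 1) * a) := by
        rw [show 2 * (n + 1) + 1 = (2 * n + 2) + 1 from by ring, step, ih.2,
          map_mul, map_pow, φih, map_mul, map_inv, map_pow, φa, φha,
          ← swap_pow a h, pow_succ (a⁻¹ * h⁻¹)]
        simp [mul_assoc, mul_inv_rev]
      refine ⟨hodd, ?_⟩
      rw [show 2 * (n + 1) + 2 = (2 * (n + 1) + 1) + 1 from by ring, step, hodd,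
        map_mul, map_pow, φih, map_mul, map_pow, φah, φa,
        show a⁻¹ * (h * a) * a = a⁻¹ * (h * a) * (a⁻¹)⁻¹ from by rw [inv_inv],
        conj_pow, pow_succ (h * a) (n + 1)]
      simp [mul_assoc]
  intro k hk
  constructor
  · rintro ⟨n, rfl⟩
    rw [show 2 * n + 1 - 1 = 2 * n from rfl, alt_even, alt_odd]
    exact (key n).1
  · intro heven
    obtain ⟨m, rfl⟩ : ∃ m, k = 2 * m + 2 := by
      obtain ⟨n, hn⟩ := heven; exact ⟨n - 1, by omega⟩
    rw [show 2 * m + 2 - 1 = 2 * m + 1 from rfl, alt_odd,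
      show alt h a (2 * m + 2) = (h * a) ^ (m + 1) from by
        rw [show 2 * m + 2 = 2 * (m + 1) from by ring, alt_even],
      (key m).2, mul_assoc]

end Stmt17
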